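/- Let (Ω, P) be a finite probability space with binary random variables ỹ, y* : Ω → {0,1}, with P(y*=0) > 0, P(y*=1) > 0, P(ỹ=0) > 0, and P(ỹ=1) > 0. Suppose both noise rates are strictly less than 1/2: P(ỹ=0|y*=1) < 1/2 and P(ỹ=1|y*=0) < 1/2. Define the ideal predicted probability p(ω) = P(ỹ=1 | y* = y*(ω)), the threshold LB = E[p | ỹ=1], and the threshold UB = E[p | ỹ=0]. Define the confident positive set CPS = {ω : p(ω) ≥ LB} and the confident negative set CNS = {ω : p(ω) ≤ UB}. Then the estimated mislabeled set {ω : ỹ(ω)=0 and ω ∈ CPS} ∪ {ω : ỹ(ω)=1 and ω ∈ CNS} contains the true mislabeled set {ω : ỹ(ω) ≠ y*(ω)}. -/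

import Mathlib

/-!
The ideal score `p` takes only two values, `a = P(ỹ=1 | y*=1)` on `{y* = 1}` and
`b = P(ỹ=1 | y*=0)` on `{y* = 0}`. The noise bounds give `b < 1/2 < a`, since
`a = 1 - P(ỹ=0 | y*=1)`. Hence `b ≤ p ≤ a` everywhere, so both thresholds, being averages
of `p`, lie in `[b, a]`: a false negative has score `a ≥ LB`, a false positive score `b ≤ UB`.
-/

open Finset

noncomputable def Pr {Ω : Type} [Fintype Ω] (w : Ω → ℝ) (A : Set Ω) : ℝ :=
  ∑ ω, A.indicator w ω

noncomputable def cPr {Ω : Type} [Fintype Ω] (w : Ω → ℝ) (A B : Set Ω) : ℝ :=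
  Pr w (A ∩ B) / Pr w B

noncomputable def cExp {Ω : Type} [Fintype Ω] (w : Ω → ℝ) (f : Ω → ℝ) (B : Set Ω) : ℝ :=
  (∑ ω, B.indicator (fun ω' => w ω' * f ω') ω) / Pr w B

section

variable {Ω : Type} [Fintype Ω] (w : Ω → ℝ)

theorem Pr_inter_add_Pr_compl_inter (A B : Set Ω) :
    Pr w (A ∩ B) + Pr w (Aᶜ ∩ B) = Pr w B := by
  simp only [Pr, ← Set.indicator_indicator, ← Finset.sum_add_distrib,
    Set.indicator_self_add_compl_apply]

theorem cPr_add_cPr_compl {A B : Set Ω} (hB : 0 < Pr w B) :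
    cPr w A B + cPr w Aᶜ B = 1 := by
  rw [cPr, cPr, ← add_div, Pr_inter_add_Pr_compl_inter, div_self hB.ne']

theorem mul_Pr_eq_sum_indicator (B : Set Ω) (c : ℝ) :
    c * Pr w B = ∑ ω, B.indicator (fun ω' => w ω' * c) ω := by
  simp only [Pr, Finset.sum_mul, Set.indicator_mul_left, mul_comm c]

variable {w} (hw : ∀ ω, 0 ≤ w ω)
include hw

theorem cExp_le_of_forall_le {f : Ω → ℝ} {B : Set Ω} (hB : 0 < Pr w B) {c : ℝ}
    (hf : ∀ ω, f ω ≤ c) : cExp w f B ≤ c := by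
  rw [cExp, div_le_iff₀ hB, mul_Pr_eq_sum_indicator]
  exact Finset.sum_le_sum fun ω _ =>
    Set.indicator_le_indicator (mul_le_mul_of_nonneg_left (hf ω) (hw ω))

theorem le_cExp_of_forall_le {f : Ω → ℝ} {B : Set Ω} (hB : 0 < Pr w B) {c : ℝ}
    (hf : ∀ ω, c ≤ f ω) : c ≤ cExp w f B := by
  rw [cExp, le_div_iff₀ hB, mul_Pr_eq_sum_indicator]
  exact Finset.sum_le_sum fun ω _ =>
    Set.indicator_le_indicator (mul_le_mul_of_nonneg_left (hf ω) (hw ω))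

end

theorem setOf_eq_zero_eq_compl {Ω : Type} (t : Ω → Fin 2) :
    {ω | t ω = 0} = {ω | t ω = 1}ᶜ := by
  ext ω
  simp only [Set.mem_ofPred_eq, Set.mem_compl_iff]
  omega

theorem stmt4_general {Ω : Type} [Fintype Ω] (w : Ω → ℝ) (ty ys : Ω → Fin 2)
    (hw : ∀ ω, 0 ≤ w ω)
    (hys1 : 0 < Pr w {ω | ys ω = 1})
    (hty0 : 0 < Pr w {ω | ty ω = 0}) (hty1 : 0 < Pr w {ω | ty ω = 1})
    (hn0 : cPr w {ω | ty ω = 0} {ω | ys ω = 1} < 1/2)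
    (hn1 : cPr w {ω | ty ω = 1} {ω | ys ω = 0} < 1/2)
    (p : Ω → ℝ) (hp : ∀ ω, p ω = cPr w {ω' | ty ω' = 1} {ω' | ys ω' = ys ω})
    (LB UB : ℝ)
    (hLB : LB = cExp w p {ω | ty ω = 1})
    (hUB : UB = cExp w p {ω | ty ω = 0}) :
    {ω | ty ω ≠ ys ω} ⊆
      ({ω | ty ω = 0} ∩ {ω | LB ≤ p ω}) ∪ ({ω | ty ω = 1} ∩ {ω | p ω ≤ UB}) := by
  set a := cPr w {ω | ty ω = 1} {ω | ys ω = 1}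
  set b := cPr w {ω | ty ω = 1} {ω | ys ω = 0}
  have hpa : ∀ ω, ys ω = 1 → p ω = a := fun ω h => by rw [hp ω, h]
  have hpb : ∀ ω, ys ω = 0 → p ω = b := fun ω h => by rw [hp ω, h]
  have hb_lt_a : b < a := by
    have := cPr_add_cPr_compl w (A := {ω | ty ω = 1}) hys1
    rw [← setOf_eq_zero_eq_compl] at this
    linarith
  have hys_cases : ∀ ω, ys ω = 0 ∨ ys ω = 1 := fun ω => by omega
  have hp_le : ∀ ω, p ω ≤ a := fun ω => by
    rcases hys_cases ω with h | h
    · exact (hpb ω h).trans_le hb_lt_a.le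
    · exact (hpa ω h).le
  have le_hp : ∀ ω, b ≤ p ω := fun ω => by
    rcases hys_cases ω with h | h
    · exact (hpb ω h).ge
    · exact hb_lt_a.le.trans_eq (hpa ω h).symm
  have hLB_le : LB ≤ a := hLB ▸ cExp_le_of_forall_le hw hty1 hp_le
  have le_hUB : b ≤ UB := hUB ▸ le_cExp_of_forall_le hw hty0 le_hp
  intro ω (hω : ty ω ≠ ys ω)
  rcases hys_cases ω with h | h
  · exact Or.inr ⟨(by omega : ty ω = 1), (hpb ω h).trans_le le_hUB⟩
  · exact Or.inl ⟨(by omega : ty ω = 0), hLB_le.trans_eq (hpa ω h).symm⟩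

/-- Theorem 1 (single group): under ideal predicted probabilities and noise rates
below 1/2, every mislabeled instance is flagged by the DeCoLe thresholding. -/
theorem stmt4 {Ω : Type} [Fintype Ω] (w : Ω → ℝ) (ty ys : Ω → Fin 2)
    (hw : ∀ ω, 0 ≤ w ω) (hsum : ∑ ω, w ω = 1)
    (hys0 : 0 < Pr w {ω | ys ω = 0}) (hys1 : 0 < Pr w {ω | ys ω = 1})
    (hty0 : 0 < Pr w {ω | ty ω = 0}) (hty1 : 0 < Pr w {ω | ty ω = 1})
    (hn0 : cPr w {ω | ty ω = 0} {ω | ys ω = 1} < 1/2)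
    (hn1 : cPr w {ω | ty ω = 1} {ω | ys ω = 0} < 1/2)
    (p : Ω → ℝ) (hp : ∀ ω, p ω = cPr w {ω' | ty ω' = 1} {ω' | ys ω' = ys ω})
    (LB UB : ℝ)
    (hLB : LB = cExp w p {ω | ty ω = 1})
    (hUB : UB = cExp w p {ω | ty ω = 0}) :
    {ω | ty ω ≠ ys ω} ⊆
      ({ω | ty ω = 0} ∩ {ω | LB ≤ p ω}) ∪ ({ω | ty ω = 1} ∩ {ω | p ω ≤ UB}) :=
  stmt4_general w ty ys hw hys1 hty0 hty1 hn0 hn1 p hp LB UB hLB hUB
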